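/- Lyapunov exponential stability criterion: let A(t) be a continuous matrix-valued function on [0,∞) with values in R^{n×n}, P a positive definite symmetric n×n matrix, and τ > 0 a constant such that A(t)^T P + P A(t) ≤ -τ I for all t. Then every solution ξ of ξ'(t) = A(t)ξ(t) satisfies ξ(t)^T P ξ(t) ≤ e^{-(τ/λ_P) t} ξ(0)^T P ξ(0), where λ_P is the largest eigenvalue of P; in particular ξ(t) → 0 exponentially. -/

import Mathlib

open Matrix

/-- Rayleigh quotient bound for a real symmetric matrix. -/
theorem quad_form_le_max_eig {n : ℕ} {P : Matrix (Fin n) (Fin n) ℝ}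
    (hH : P.IsHermitian) {lamP : ℝ}
    (hmax : ∀ i, hH.eigenvalues i ≤ lamP) (x : Fin n → ℝ) :
    x ⬝ᵥ P.mulVec x ≤ lamP * (x ⬝ᵥ x) := by
  set U : Matrix (Fin n) (Fin n) ℝ := (hH.eigenvectorUnitary : Matrix (Fin n) (Fin n) ℝ) with hU
  set y : Fin n → ℝ := Uᵀ *ᵥ x with hy
  have hsU : star U = Uᵀ := by
    rw [Matrix.star_eq_conjTranspose, Matrix.conjTranspose_eq_transpose_of_trivial]
  have h1 : x ⬝ᵥ P.mulVec x = ∑ i, hH.eigenvalues i * (y i * y i) := by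
    conv_lhs => rw [hH.spectral_theorem, Unitary.conjStarAlgAut_apply]
    rw [hsU, ← Matrix.mulVec_mulVec, ← Matrix.mulVec_mulVec, Matrix.dotProduct_mulVec,
      ← Matrix.mulVec_transpose]
    simp [dotProduct, Matrix.mulVec_diagonal, hy, hU, mul_comm, mul_assoc, mul_left_comm]
  have h2 : x ⬝ᵥ x = ∑ i, y i * y i := by
    have hUU : U * Uᵀ = 1 := by
      rw [← hsU]; exact Matrix.mem_unitaryGroup_iff.mp (Matrix.IsHermitian.eigenvectorUnitary hH).2
    calc x ⬝ᵥ x = x ⬝ᵥ ((U * Uᵀ) *ᵥ x) := by rw [hUU, Matrix.one_mulVec]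
    _ = ∑ i, y i * y i := by
        rw [← Matrix.mulVec_mulVec, Matrix.dotProduct_mulVec, ← Matrix.mulVec_transpose]
        rfl
  rw [h1, h2, Finset.mul_sum]
  exact Finset.sum_le_sum fun i _ => mul_le_mul_of_nonneg_right (hmax i) (mul_self_nonneg _)

/-- Lyapunov exponential stability criterion: if `A(t)ᵀP + PA(t) ≤ -τI` for all
`t ≥ 0`, with `P` symmetric positive definite having largest eigenvalue `λP`,
then every solution of `ξ' = A(t)ξ` satisfies
`ξ(t)ᵀPξ(t) ≤ e^{-(τ/λP)t}·ξ(0)ᵀPξ(0)`. -/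
theorem lyapunov_exponential_stability
    (n : ℕ) (A : ℝ → Matrix (Fin n) (Fin n) ℝ) (hA : Continuous A)
    (P : Matrix (Fin n) (Fin n) ℝ) (hP : P.PosDef)
    (lamP : ℝ)
    (hlamP : Module.End.HasEigenvalue (Matrix.toLin' P) lamP)
    (hlamPmax : ∀ μ : ℝ, Module.End.HasEigenvalue (Matrix.toLin' P) μ → μ ≤ lamP)
    (τ : ℝ) (hτ : 0 < τ)
    (hineq : ∀ t ≥ (0 : ℝ), ∀ x : Fin n → ℝ,
      x ⬝ᵥ ((A t).transpose * P + P * A t).mulVec x ≤ -τ * (x ⬝ᵥ x))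
    (ξ : ℝ → Fin n → ℝ)
    (hξ : ∀ t ≥ (0 : ℝ), HasDerivAt ξ ((A t).mulVec (ξ t)) t) :
    ∀ t ≥ (0 : ℝ),
      ξ t ⬝ᵥ P.mulVec (ξ t) ≤ Real.exp (-(τ / lamP) * t) * (ξ 0 ⬝ᵥ P.mulVec (ξ 0)) := by
  have hH : P.IsHermitian := hP.1
  -- lamP is positive
  have hlam0 : 0 < lamP := by
    obtain ⟨v, hv⟩ := hlamP.exists_hasEigenvector
    have hPv : P.mulVec v = lamP • v := by
      simpa [Matrix.toLin'_apply] using Module.End.mem_eigenspace_iff.mp hv.1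
    have hpos := hP.dotProduct_mulVec_pos hv.2
    rw [hPv] at hpos
    rw [star_trivial] at hpos
    have hvv : 0 ≤ v ⬝ᵥ v := by
      simpa [dotProduct] using
        Finset.sum_nonneg fun i _ => mul_self_nonneg (v i)
    have hlv : v ⬝ᵥ (lamP • v) = lamP * (v ⬝ᵥ v) := by
      simp [dotProduct_smul, smul_eq_mul]
    rw [hlv] at hpos
    nlinarith
  -- all eigenvalues of P are ≤ lamP
  have heig : ∀ i, hH.eigenvalues i ≤ lamP := by
    intro i
    apply hlamPmax
    apply Module.End.hasEigenvalue_of_hasEigenvector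
      (x := (⇑(hH.eigenvectorBasis i) : Fin n → ℝ))
    constructor
    · rw [Module.End.mem_eigenspace_iff]
      simpa [Matrix.toLin'_apply] using hH.mulVec_eigenvectorBasis i
    · intro h0
      have hne : hH.eigenvectorBasis i ≠ 0 := by
        simpa using hH.eigenvectorBasis.toBasis.ne_zero i
      apply hne
      ext j
      exact congrFun h0 j
  have key : ∀ x : Fin n → ℝ, x ⬝ᵥ P.mulVec x ≤ lamP * (x ⬝ᵥ x) :=
    quad_form_le_max_eig hH heig
  -- the Lyapunov function and its derivative
  set V : ℝ → ℝ := fun s => ξ s ⬝ᵥ P.mulVec (ξ s) with hVdef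
  set V' : ℝ → ℝ := fun s => ξ s ⬝ᵥ ((A s).transpose * P + P * A s).mulVec (ξ s) with hV'def
  have hV : ∀ s ≥ (0 : ℝ), HasDerivAt V (V' s) s := by
    intro s hs
    have hcomp : ∀ i, HasDerivAt (fun u => ξ u i) ((A s).mulVec (ξ s) i) s :=
      fun i => hasDerivAt_pi.1 (hξ s hs) i
    set d : Fin n → ℝ := (A s).mulVec (ξ s) with hd
    have hder : HasDerivAt (fun u => ∑ i, ∑ j, ξ u i * (P i j * ξ u j))
        (∑ i, ∑ j, (d i * (P i j * ξ s j) + ξ s i * (P i j * d j))) s := by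
      apply HasDerivAt.fun_sum
      intro i _
      apply HasDerivAt.fun_sum
      intro j _
      exact (hcomp i).mul ((hcomp j).const_mul (P i j))
    have hVeq : V = fun u => ∑ i, ∑ j, ξ u i * (P i j * ξ u j) := by
      funext u
      simp [hVdef, dotProduct, Matrix.mulVec, Finset.mul_sum]
    have hsum : (∑ i, ∑ j, (d i * (P i j * ξ s j) + ξ s i * (P i j * d j)))
        = d ⬝ᵥ P.mulVec (ξ s) + ξ s ⬝ᵥ P.mulVec d := by
      simp [dotProduct, Matrix.mulVec, Finset.mul_sum, Finset.sum_add_distrib]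
    have hV'eq : V' s = d ⬝ᵥ P.mulVec (ξ s) + ξ s ⬝ᵥ P.mulVec d := by
      rw [hV'def]
      simp only [Matrix.add_mulVec, dotProduct_add]
      congr 1
      · rw [← Matrix.mulVec_mulVec, Matrix.dotProduct_mulVec, Matrix.vecMul_transpose]
      · rw [← Matrix.mulVec_mulVec]
    rw [hVeq, hV'eq, ← hsum]
    exact hder
  intro t ht
  -- apply Grönwall's inequality on [0, t]
  have hcont : ContinuousOn V (Set.Icc 0 t) := fun s hs =>
    ((hV s hs.1).continuousAt).continuousWithinAt
  have hslope : ∀ x ∈ Set.Ico (0:ℝ) t, ∀ r, V' x < r →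
      ∃ᶠ z in nhdsWithin x (Set.Ioi x), (z - x)⁻¹ * (V z - V x) < r := by
    intro x hx r hr
    have := ((hV x hx.1).hasDerivWithinAt.liminf_right_slope_le hr)
    simpa [slope, smul_eq_mul] using this
  have hbound : ∀ x ∈ Set.Ico (0:ℝ) t, V' x ≤ (-(τ / lamP)) * V x + 0 := by
    intro x hx
    rw [add_zero]
    have h1 : V' x ≤ -τ * (ξ x ⬝ᵥ ξ x) := hineq x hx.1 (ξ x)
    have h2 : V x ≤ lamP * (ξ x ⬝ᵥ ξ x) := key (ξ x)
    have h3 : (-(τ / lamP)) * (lamP * (ξ x ⬝ᵥ ξ x)) ≤ (-(τ / lamP)) * V x :=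
      mul_le_mul_of_nonpos_left h2 (neg_nonpos.mpr (le_of_lt (div_pos hτ hlam0)))
    have h4 : (-(τ / lamP)) * (lamP * (ξ x ⬝ᵥ ξ x)) = -τ * (ξ x ⬝ᵥ ξ x) := by
      field_simp
    linarith
  have := le_gronwallBound_of_liminf_deriv_right_le (f := V) (f' := V')
    (δ := V 0) (K := -(τ / lamP)) (ε := 0) hcont hslope le_rfl hbound t ⟨ht, le_rfl⟩
  rw [gronwallBound_ε0, sub_zero] at this
  calc ξ t ⬝ᵥ P.mulVec (ξ t) = V t := rfl
  _ ≤ V 0 * Real.exp (-(τ / lamP) * t) := this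
  _ = Real.exp (-(τ / lamP) * t) * (ξ 0 ⬝ᵥ P.mulVec (ξ 0)) := by rw [mul_comm]
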